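/- Let f : ℂ → ℂ be a bounded holomorphic function on an open convex set Ω with |f| ≤ M on the boundary ∂Ω and f continuous on the closure of Ω with a limit at infinity of modulus ≤ M. Then |f(z)| ≤ M for all z ∈ Ω (maximum principle for unbounded convex domains contained in a half-plane, for functions in the algebra A(Ω)). -/
import Mathlib


open Filter

/-- Maximum principle for functions in the algebra `A(Ω)` on an open convex subset of the
right half-plane: a bound `M` on the boundary and at infinity propagates to the interior. -/
theorem maximum_principle_unbounded_convex
    (Ω : Set ℂ) (hΩconv : Convex ℝ Ω) (hΩopen : IsOpen Ω)
    (hright : Ω ⊆ {z : ℂ | 0 < z.re})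
    (f : ℂ → ℂ) (M : ℝ)
    (hf : DifferentiableOn ℂ f Ω)
    (hfc : ContinuousOn f (closure Ω))
    (L : ℂ) (hL : Tendsto f (Filter.cocompact ℂ ⊓ Filter.principal (closure Ω)) (nhds L))
    (hLM : ‖L‖ ≤ M)
    (hbd : ∀ z ∈ frontier Ω, ‖f z‖ ≤ M) :
    ∀ z ∈ Ω, ‖f z‖ ≤ M := by
  intro z hz
  refine le_of_forall_pos_le_add fun ε hε => ?_
  -- eventually ‖f w‖ < M + ε near infinity within closure Ω
  have hev : ∀ᶠ w in Filter.cocompact ℂ ⊓ Filter.principal (closure Ω), ‖f w‖ < M + ε := by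
    have : Tendsto (fun w => ‖f w‖) (Filter.cocompact ℂ ⊓ Filter.principal (closure Ω))
        (nhds ‖L‖) := hL.norm
    exact this.eventually (Filter.Tendsto.eventually_lt_const (by linarith) tendsto_id)
  rw [Filter.eventually_inf_principal] at hev
  rcases Filter.mem_cocompact.mp hev with ⟨K, hK, hKsub⟩
  rcases hK.isBounded.subset_closedBall 0 with ⟨r, hr⟩
  set R : ℝ := max r ‖z‖ + 1 with hR
  have hRr : r < R := by
    have := le_max_left r ‖z‖; simp only [hR]; linarith
  have hzR : ‖z‖ < R := by
    have := le_max_right r ‖z‖; simp only [hR]; linarith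
  set U : Set ℂ := Ω ∩ Metric.ball (0 : ℂ) R with hU
  have hzU : z ∈ U := ⟨hz, by simpa [Metric.mem_ball] using hzR⟩
  have hUb : Bornology.IsBounded U :=
    (Metric.isBounded_ball).subset (Set.inter_subset_right)
  have hUcl : closure U ⊆ closure Ω :=
    closure_mono Set.inter_subset_left
  have hdc : DiffContOnCl ℂ f U :=
    ⟨hf.mono Set.inter_subset_left, hfc.mono hUcl⟩
  have hfr : ∀ w ∈ frontier U, ‖f w‖ ≤ M + ε := by
    intro w hw
    have hw' := frontier_inter_subset Ω (Metric.ball (0 : ℂ) R) hw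
    rcases hw' with ⟨hwf, _⟩ | ⟨hwc, hwf⟩
    · exact (hbd w hwf).trans (by linarith)
    · -- w on the sphere of radius R, inside closure Ω
      have hwR : ‖w‖ = R := by
        have : w ∈ Metric.sphere (0 : ℂ) R := by
          rwa [frontier_ball] at hwf
          exact by positivity
        simpa using this
      have hwK : w ∉ K := by
        intro hmem
        have := hr hmem
        rw [Metric.mem_closedBall, dist_zero_right, hwR] at this
        linarith
      exact (hKsub hwK hwc).le
  have := Complex.norm_le_of_forall_mem_frontier_norm_le hUb hdc hfr
    (subset_closure hzU)
  exact this
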